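/- arXiv:2505.07789 — 6 statements merged into one kernel-verified Lean document; each statement's English description precedes it below -/
import Mathlib

section
/- In any quasi relation algebra the identities ∼1 = ¬1 = −1 hold, and the identity (Di): ¬∼a = −¬a holds for every element a. -/
/-- An involutive FL-algebra (InFL-algebra) structure on a lattice:
a monoid operation with residuation law (Res) expressed via the two
linear negations `lneg` (∼) and `rneg` (−), which are inverse involutions. -/
structure InFL (A : Type*) [Lattice A] where
  mul : A → A → A
  one : A
  mul_assoc : ∀ a b c : A, mul (mul a b) c = mul a (mul b c)
  one_mul : ∀ a : A, mul one a = a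
  mul_one : ∀ a : A, mul a one = a
  lneg : A → A
  rneg : A → A
  res_left : ∀ a b c : A, mul a b ≤ c ↔ a ≤ rneg (mul b (lneg c))
  res_right : ∀ a b c : A, mul a b ≤ c ↔ b ≤ lneg (mul (rneg c) a)
  rneg_lneg : ∀ a : A, rneg (lneg a) = a
  lneg_rneg : ∀ a : A, lneg (rneg a) = a

/-- The sum operation `a + b := −(∼b · ∼a)` of an InFL-algebra. -/
def InFL.sum {A : Type*} [Lattice A] (S : InFL A) (a b : A) : A :=
  S.rneg (S.mul (S.lneg b) (S.lneg a))

/-- A quasi relation algebra: a De Morgan InFL-algebra satisfying (Dp):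
`¬(a·b) = ¬a + ¬b`. -/
structure QRA (A : Type*) [Lattice A] extends InFL A where
  neg : A → A
  neg_neg : ∀ a : A, neg (neg a) = a
  dm : ∀ a b : A, neg (a ⊓ b) = neg a ⊔ neg b
  dp : ∀ a b : A, neg (mul a b) = rneg (mul (lneg (neg b)) (lneg (neg a)))

/-!
The converse `a ↦ ∼¬a` is an order automorphism by (Dm) and reverses products by
(Dp). Being surjective, it fixes `1`, which gives `¬1 = −1`. Since `−b` is the largest `x`
with `x·b ≤ 0` and `∼c` the largest `y` with `c·y ≤ 0`, the converse carries `−b` to `∼`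
of the converse of `b`, which unfolds to (Di).
-/

namespace InFL

variable {A : Type*} [Lattice A] (S : InFL A)

theorem mul_le_rneg_one_iff (a b : A) : S.mul a b ≤ S.rneg S.one ↔ a ≤ S.rneg b := by
  simpa only [S.lneg_rneg, S.mul_one] using S.res_left a b (S.rneg S.one)

theorem mul_le_lneg_one_iff (a b : A) : S.mul a b ≤ S.lneg S.one ↔ b ≤ S.lneg a := by
  simpa only [S.rneg_lneg, S.one_mul] using S.res_right a b (S.lneg S.one)

theorem lneg_one_eq_rneg_one : S.lneg S.one = S.rneg S.one := by
  apply le_antisymm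
  · simpa only [S.one_mul] using
      (S.mul_le_rneg_one_iff S.one (S.lneg S.one)).mpr (S.rneg_lneg _).ge
  · simpa only [S.mul_one] using
      (S.mul_le_lneg_one_iff (S.rneg S.one) S.one).mpr (S.lneg_rneg _).ge

theorem le_rneg_iff_le_lneg (a b : A) : a ≤ S.rneg b ↔ b ≤ S.lneg a := by
  rw [← S.mul_le_rneg_one_iff, ← S.mul_le_lneg_one_iff, S.lneg_one_eq_rneg_one]

theorem lneg_le_lneg_iff {a b : A} : S.lneg b ≤ S.lneg a ↔ a ≤ b := by
  rw [← S.le_rneg_iff_le_lneg, S.rneg_lneg]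

end InFL

namespace QRA

variable {A : Type*} [Lattice A] (Q : QRA A)

theorem neg_le_neg {a b : A} (h : a ≤ b) : Q.neg b ≤ Q.neg a := by
  have : Q.neg a = Q.neg b ⊔ Q.neg a := by rw [← Q.dm, inf_eq_right.mpr h]
  exact this ▸ le_sup_left

theorem neg_le_neg_iff {a b : A} : Q.neg b ≤ Q.neg a ↔ a ≤ b :=
  ⟨fun h => Q.neg_neg a ▸ Q.neg_neg b ▸ Q.neg_le_neg h, Q.neg_le_neg⟩

/-- In a relation algebra `∼¬a` is the converse of `a`. -/
def conv (a : A) : A := Q.lneg (Q.neg a)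

theorem conv_mul (a b : A) : Q.conv (Q.mul a b) = Q.mul (Q.conv b) (Q.conv a) := by
  rw [conv, Q.dp, Q.lneg_rneg, conv, conv]

theorem conv_neg_rneg (x : A) : Q.conv (Q.neg (Q.rneg x)) = x := by
  rw [conv, Q.neg_neg, Q.lneg_rneg]

theorem conv_le_conv_iff {a b : A} : Q.conv a ≤ Q.conv b ↔ a ≤ b := by
  rw [conv, conv, Q.lneg_le_lneg_iff, Q.neg_le_neg_iff]

theorem conv_one : Q.conv Q.one = Q.one := by
  have conv_one_mul (x : A) : Q.mul (Q.conv Q.one) x = x := by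
    rw [← Q.conv_neg_rneg x, ← Q.conv_mul, Q.mul_one]
  rw [← Q.mul_one (Q.conv Q.one), conv_one_mul]

theorem neg_one_eq_rneg_one : Q.neg Q.one = Q.rneg Q.one := by
  simpa only [conv, Q.rneg_lneg] using congrArg Q.rneg Q.conv_one

theorem conv_rneg_one : Q.conv (Q.rneg Q.one) = Q.rneg Q.one := by
  rw [conv, ← Q.neg_one_eq_rneg_one, Q.neg_neg, Q.lneg_one_eq_rneg_one, Q.neg_one_eq_rneg_one]

theorem conv_rneg (b : A) : Q.conv (Q.rneg b) = Q.lneg (Q.conv b) := by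
  refine eq_of_forall_le_iff fun y => ?_
  obtain ⟨x, rfl⟩ : ∃ x, Q.conv x = y := ⟨_, Q.conv_neg_rneg y⟩
  calc Q.conv x ≤ Q.conv (Q.rneg b) ↔ x ≤ Q.rneg b := Q.conv_le_conv_iff
    _ ↔ Q.mul x b ≤ Q.rneg Q.one := (Q.mul_le_rneg_one_iff x b).symm
    _ ↔ Q.conv (Q.mul x b) ≤ Q.conv (Q.rneg Q.one) := Q.conv_le_conv_iff.symm
    _ ↔ Q.mul (Q.conv b) (Q.conv x) ≤ Q.lneg Q.one := by
      rw [Q.conv_mul, Q.conv_rneg_one, Q.lneg_one_eq_rneg_one]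
    _ ↔ Q.conv x ≤ Q.lneg (Q.conv b) := Q.mul_le_lneg_one_iff _ _

theorem neg_lneg (a : A) : Q.neg (Q.lneg a) = Q.rneg (Q.neg a) := by
  have h := congrArg Q.rneg (Q.conv_rneg (Q.lneg a))
  rw [conv, conv, Q.rneg_lneg, Q.rneg_lneg, Q.rneg_lneg] at h
  rw [h, Q.rneg_lneg]

end QRA

/-- In any quasi relation algebra the identities `∼1 = ¬1 = −1` hold, and the
identity (Di): `¬∼a = −¬a` holds for every element `a`. -/
theorem qra_neg_one_and_di {A : Type*} [Lattice A] (Q : QRA A) :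
    Q.lneg Q.one = Q.neg Q.one ∧ Q.neg Q.one = Q.rneg Q.one ∧
    ∀ a : A, Q.neg (Q.lneg a) = Q.rneg (Q.neg a) :=
  ⟨by rw [Q.lneg_one_eq_rneg_one, Q.neg_one_eq_rneg_one], Q.neg_one_eq_rneg_one, Q.neg_lneg⟩
end

section
/- Let W = (W, I, ≼, ∘, ∼, −) be a DInFL-frame. Then its complex algebra W^+ = (Up(W,≼), ∩, ∪, ∘, I, ∼, −) is a distributive involutive FL-algebra: Up(W,≼) is closed under ∩, ∪, ∘, ∼ and −, contains I, the operation ∘ is associative with identity I, and for all upsets T, U, V: T∘U ⊆ V ⟺ U ⊆ ∼(−V∘T) ⟺ T ⊆ −(U∘∼V). -/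
/-- Extension of a binary set-operation `c : W → W → Set W` to subsets:
`U ∘ V = ⋃ { x ∘ y : x ∈ U, y ∈ V }`. -/
def setComp {W : Type*} (c : W → W → Set W) (U V : Set W) : Set W :=
  {z | ∃ x ∈ U, ∃ y ∈ V, z ∈ c x y}

/-- A DInFL-frame `(W, I, ≼, ∘, ∼, −)`. -/
structure DInFLFrame (W : Type*) where
  I : Set W
  le : W → W → Prop
  le_refl : ∀ x, le x x
  le_trans : ∀ x y z, le x y → le y z → le x z
  le_antisymm : ∀ x y, le x y → le y x → x = y
  comp : W → W → Set W
  tld : W → W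
  mns : W → W
  ax1 : ∀ x y, (le x y ↔ y ∈ setComp comp I {x}) ∧ (le x y ↔ y ∈ setComp comp {x} I)
  ax2 : ∀ x y, le x y → x ∈ I → y ∈ I
  ax3 : ∀ u v x y, le x y → x ∈ comp u v → y ∈ comp u v
  ax4 : ∀ x y z, setComp comp (comp x y) {z} = setComp comp {x} (comp y z)
  ax5 : ∀ x y z, tld z ∈ comp x y ↔ mns y ∈ comp z x
  ax6 : ∀ x, le (mns (tld x)) x ∧ le (tld (mns x)) x

/-- Upsets of the underlying poset of a DInFL-frame. -/
def DInFLFrame.IsUpset {W : Type*} (F : DInFLFrame W) (U : Set W) : Prop :=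
  ∀ x y, F.le x y → x ∈ U → y ∈ U

/-- The operation `∼U = {w : w⁻ ∉ U}` of the complex algebra. -/
def DInFLFrame.sneg {W : Type*} (F : DInFLFrame W) (U : Set W) : Set W :=
  {w | F.mns w ∉ U}

/-- The operation `−U = {w : w^∼ ∉ U}` of the complex algebra. -/
def DInFLFrame.mneg {W : Type*} (F : DInFLFrame W) (U : Set W) : Set W :=
  {w | F.tld w ∉ U}

/-
Axiom (1) makes `I` a two-sided unit on upsets, (3) and (2) make `∘` and `I` upward closed, and (4) lifts to
associativity of the set-level product. Axiom (5), together with (1) and (6), forces `∼` and `−`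
to be mutually inverse order-reversing bijections, so that `z ∈ t ∘ u` can be rotated to
`u^− ∈ z^− ∘ t` or to `t^∼ ∈ u ∘ z^∼`; unfolding `∼(−V ∘ T)` and `−(U ∘ ∼V)` with these
rotations shows that each of them is the set of points whose product with `T`, resp. `U`, lies
in `V`, which is the residuation law.
-/

lemma setComp_subset_iff {W : Type*} {c : W → W → Set W} {T U V : Set W} :
    setComp c T U ⊆ V ↔ ∀ t ∈ T, ∀ u ∈ U, c t u ⊆ V := by
  constructor
  · intro h t ht u hu z hz
    exact h ⟨t, ht, u, hu, hz⟩
  · rintro h z ⟨t, ht, u, hu, hz⟩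
    exact h t ht u hu hz

lemma setComp_assoc {W : Type*} {c : W → W → Set W}
    (hc : ∀ x y z, setComp c (c x y) {z} = setComp c {x} (c y z)) (U V T : Set W) :
    setComp c (setComp c U V) T = setComp c U (setComp c V T) := by
  have key : ∀ x y z w, (∃ a ∈ c x y, w ∈ c a z) ↔ ∃ b ∈ c y z, w ∈ c x b := by
    intro x y z w
    simpa [setComp] using Set.ext_iff.mp (hc x y z) w
  ext w
  constructor
  · rintro ⟨a, ⟨x, hx, y, hy, ha⟩, z, hz, hw⟩
    obtain ⟨b, hb, hw'⟩ := (key x y z w).mp ⟨a, ha, hw⟩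
    exact ⟨x, hx, b, ⟨y, hy, z, hz, hb⟩, hw'⟩
  · rintro ⟨x, hx, b, ⟨y, hy, z, hz, hb⟩, hw⟩
    obtain ⟨a, ha, hw'⟩ := (key x y z w).mpr ⟨b, hb, hw⟩
    exact ⟨a, ⟨x, hx, y, hy, ha⟩, z, hz, hw'⟩

namespace DInFLFrame

variable {W : Type*} (F : DInFLFrame W)

lemma le_iff_exists_I_comp {x y : W} : F.le x y ↔ ∃ e ∈ F.I, y ∈ F.comp e x := by
  simpa [setComp] using (F.ax1 x y).1

lemma le_iff_exists_comp_I {x y : W} : F.le x y ↔ ∃ e ∈ F.I, y ∈ F.comp x e := by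
  simpa [setComp] using (F.ax1 x y).2

lemma tld_mns (x : W) : F.tld (F.mns x) = x := by
  obtain ⟨e, he, h⟩ := F.le_iff_exists_comp_I.mp (F.le_refl (F.mns x))
  have h' : F.tld (F.mns x) ∈ F.comp e x := (F.ax5 e x (F.mns x)).mpr h
  exact F.le_antisymm _ _ (F.ax6 x).2 (F.le_iff_exists_I_comp.mpr ⟨e, he, h'⟩)

lemma mns_tld (x : W) : F.mns (F.tld x) = x := by
  obtain ⟨e, he, h⟩ := F.le_iff_exists_I_comp.mp (F.le_refl (F.tld x))
  have h' : F.mns (F.tld x) ∈ F.comp x e := (F.ax5 e (F.tld x) x).mp h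
  exact F.le_antisymm _ _ (F.ax6 x).1 (F.le_iff_exists_comp_I.mpr ⟨e, he, h'⟩)

lemma mem_comp_iff_mns_mem {t u z : W} :
    z ∈ F.comp t u ↔ F.mns u ∈ F.comp (F.mns z) t := by
  simpa only [tld_mns] using F.ax5 t u (F.mns z)

lemma mem_comp_iff_tld_mem {t u z : W} :
    z ∈ F.comp t u ↔ F.tld t ∈ F.comp u (F.tld z) := by
  simpa only [mns_tld] using (F.ax5 u (F.tld z) t).symm

lemma tld_anti {x y : W} (h : F.le x y) : F.le (F.tld y) (F.tld x) := by
  obtain ⟨e, he, hy⟩ := F.le_iff_exists_comp_I.mp h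
  exact F.le_iff_exists_I_comp.mpr ⟨e, he, F.mem_comp_iff_tld_mem.mp hy⟩

lemma mns_anti {x y : W} (h : F.le x y) : F.le (F.mns y) (F.mns x) := by
  obtain ⟨e, he, hy⟩ := F.le_iff_exists_I_comp.mp h
  exact F.le_iff_exists_comp_I.mpr ⟨e, he, F.mem_comp_iff_mns_mem.mp hy⟩

lemma isUpset_inter {U V : Set W} (hU : F.IsUpset U) (hV : F.IsUpset V) :
    F.IsUpset (U ∩ V) :=
  fun x y hxy hx => ⟨hU x y hxy hx.1, hV x y hxy hx.2⟩

lemma isUpset_union {U V : Set W} (hU : F.IsUpset U) (hV : F.IsUpset V) :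
    F.IsUpset (U ∪ V) :=
  fun x y hxy hx => hx.imp (hU x y hxy) (hV x y hxy)

lemma isUpset_I : F.IsUpset F.I := F.ax2

lemma isUpset_setComp (U V : Set W) : F.IsUpset (setComp F.comp U V) := by
  rintro x y hxy ⟨u, hu, v, hv, hx⟩
  exact ⟨u, hu, v, hv, F.ax3 u v x y hxy hx⟩

lemma isUpset_sneg {U : Set W} (hU : F.IsUpset U) : F.IsUpset (F.sneg U) :=
  fun _ _ hxy hx hy => hx (hU _ _ (F.mns_anti hxy) hy)

lemma isUpset_mneg {U : Set W} (hU : F.IsUpset U) : F.IsUpset (F.mneg U) :=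
  fun _ _ hxy hx hy => hx (hU _ _ (F.tld_anti hxy) hy)

lemma I_setComp {U : Set W} (hU : F.IsUpset U) : setComp F.comp F.I U = U := by
  apply Set.Subset.antisymm
  · rintro z ⟨e, he, u, hu, hz⟩
    exact hU u z (F.le_iff_exists_I_comp.mpr ⟨e, he, hz⟩) hu
  · intro u hu
    obtain ⟨e, he, h⟩ := F.le_iff_exists_I_comp.mp (F.le_refl u)
    exact ⟨e, he, u, hu, h⟩

lemma setComp_I {U : Set W} (hU : F.IsUpset U) : setComp F.comp U F.I = U := by
  apply Set.Subset.antisymm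
  · rintro z ⟨u, hu, e, he, hz⟩
    exact hU u z (F.le_iff_exists_comp_I.mpr ⟨e, he, hz⟩) hu
  · intro u hu
    obtain ⟨e, he, h⟩ := F.le_iff_exists_comp_I.mp (F.le_refl u)
    exact ⟨u, hu, e, he, h⟩

lemma mem_sneg_setComp_mneg_iff {T V : Set W} {u : W} :
    u ∈ F.sneg (setComp F.comp (F.mneg V) T) ↔ ∀ t ∈ T, F.comp t u ⊆ V := by
  constructor
  · intro h t ht z hz
    by_contra hzV
    have hmns : F.mns z ∈ F.mneg V := by
      change F.tld (F.mns z) ∉ V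
      rwa [tld_mns]
    exact h ⟨F.mns z, hmns, t, ht, F.mem_comp_iff_mns_mem.mp hz⟩
  · rintro h ⟨w, hw, t, ht, hc⟩
    exact hw (h t ht ((F.ax5 t u w).mpr hc))

lemma mem_mneg_setComp_sneg_iff {U V : Set W} {t : W} :
    t ∈ F.mneg (setComp F.comp U (F.sneg V)) ↔ ∀ u ∈ U, F.comp t u ⊆ V := by
  constructor
  · intro h u hu z hz
    by_contra hzV
    have htld : F.tld z ∈ F.sneg V := by
      change F.mns (F.tld z) ∉ V
      rwa [mns_tld]
    exact h ⟨u, hu, F.tld z, htld, F.mem_comp_iff_tld_mem.mp hz⟩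
  · rintro h ⟨u, hu, v, hv, hc⟩
    exact hv (h u hu ((F.ax5 u v t).mp hc))

lemma setComp_subset_iff_subset_sneg {T U V : Set W} :
    setComp F.comp T U ⊆ V ↔ U ⊆ F.sneg (setComp F.comp (F.mneg V) T) := by
  rw [setComp_subset_iff]
  exact ⟨fun h _ hu => F.mem_sneg_setComp_mneg_iff.mpr fun t ht => h t ht _ hu,
    fun h t ht _ hu => F.mem_sneg_setComp_mneg_iff.mp (h hu) t ht⟩

lemma setComp_subset_iff_subset_mneg {T U V : Set W} :
    setComp F.comp T U ⊆ V ↔ T ⊆ F.mneg (setComp F.comp U (F.sneg V)) := by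
  rw [setComp_subset_iff]
  exact ⟨fun h t ht => F.mem_mneg_setComp_sneg_iff.mpr (h t ht),
    fun h t ht => F.mem_mneg_setComp_sneg_iff.mp (h ht)⟩

end DInFLFrame

/-- The complex algebra `W⁺ = (Up(W,≼), ∩, ∪, ∘, I, ∼, −)` of a DInFL-frame is a
distributive involutive FL-algebra: the upsets are closed under all operations,
`I` is an upset and an identity for the associative operation `∘`, and the
residuation law holds. -/
theorem complex_algebra_is_DInFL {W : Type*} (F : DInFLFrame W) :
    (∀ U V, F.IsUpset U → F.IsUpset V → F.IsUpset (U ∩ V) ∧ F.IsUpset (U ∪ V)) ∧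
    F.IsUpset F.I ∧
    (∀ U V, F.IsUpset U → F.IsUpset V → F.IsUpset (setComp F.comp U V)) ∧
    (∀ U, F.IsUpset U → F.IsUpset (F.sneg U) ∧ F.IsUpset (F.mneg U)) ∧
    (∀ U, F.IsUpset U → setComp F.comp F.I U = U ∧ setComp F.comp U F.I = U) ∧
    (∀ U V T : Set W,
      setComp F.comp (setComp F.comp U V) T = setComp F.comp U (setComp F.comp V T)) ∧
    (∀ T U V, F.IsUpset T → F.IsUpset U → F.IsUpset V →
      ((setComp F.comp T U ⊆ V ↔ U ⊆ F.sneg (setComp F.comp (F.mneg V) T)) ∧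
       (setComp F.comp T U ⊆ V ↔ T ⊆ F.mneg (setComp F.comp U (F.sneg V))))) :=
  ⟨fun _ _ hU hV => ⟨F.isUpset_inter hU hV, F.isUpset_union hU hV⟩,
    F.isUpset_I,
    fun U V _ _ => F.isUpset_setComp U V,
    fun _ hU => ⟨F.isUpset_sneg hU, F.isUpset_mneg hU⟩,
    fun _ hU => ⟨F.I_setComp hU, F.setComp_I hU⟩,
    setComp_assoc F.ax4,
    fun _ _ _ _ _ _ => ⟨F.setComp_subset_iff_subset_sneg, F.setComp_subset_iff_subset_mneg⟩⟩
end

section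
/- Let A = (A,∧,∨,·,1,∼,−) be a complete perfect distributive InFL-algebra. Define, on the set J∞(A) of completely join-irreducible elements: I₁ = {i ∈ J∞(A) : i ≤ 1}; a ≼ b iff b ≤ a; c ∈ a∘b iff c ≤ a·b; a^∼ = ∼κ(a); a^− = −κ(a). Then A_+ = (J∞(A), I₁, ≼, ∘, ∼, −) is a DInFL-frame. -/
/-- Completely join-irreducible element of a complete lattice. -/
def CJI {A : Type*} [CompleteLattice A] (j : A) : Prop :=
  ∀ S : Set A, j = sSup S → j ∈ S

/-- Completely meet-irreducible element of a complete lattice. -/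
def CMI {A : Type*} [CompleteLattice A] (m : A) : Prop :=
  ∀ S : Set A, m = sInf S → m ∈ S

/-- A complete lattice is perfect if the completely join-irreducibles are join-dense
and the completely meet-irreducibles are meet-dense. -/
def PerfectLattice (A : Type*) [CompleteLattice A] : Prop :=
  ∀ a : A, a = sSup {j | CJI j ∧ j ≤ a} ∧ a = sInf {m | CMI m ∧ a ≤ m}

/-- The map `κ(j) = ⋁ {a : j ≰ a}`. -/
def kappa {A : Type*} [CompleteLattice A] (j : A) : A :=
  sSup {a | ¬ j ≤ a}

/-!
In a perfect distributive lattice a completely join-irreducible `j` is completely join-prime, and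
`κ(j)` is the largest element not above `j`, which is completely meet-irreducible. Since `·`
preserves joins in each argument, every `x ∈ J∞(A)` below `a·b` lies below `i·b` for some
`i ∈ J∞(A)` with `i ≤ a` (and symmetrically); this yields the identity and associativity axioms.
The order-reversing bijections `∼`, `−` carry `M∞(A)` into `J∞(A)`. With `∼κ(z) ≤ c ↔ z ≰ −c`,
the rotation law `z ≤ −(x·y) ↔ y ≤ ∼(z·x)` of (Res) becomes axiom (5), and `κ(∼κ(x)) = ∼x`
gives `x^{∼−} = x = x^{−∼}`.
-/

section CompleteLattice

variable {A : Type*} [CompleteLattice A]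

theorem CMI.cji_map_of_antitone {f g : A → A} (hf : Antitone f) (hg : Antitone g)
    (hgf : Function.LeftInverse g f) (hfg : Function.RightInverse g f) {m : A} (hm : CMI m) :
    CJI (f m) := by
  intro T hT
  have hm_eq : m = sInf (g '' T) := by
    refine le_antisymm (le_sInf ?_) ?_
    · rintro _ ⟨t, ht, rfl⟩
      exact hgf m ▸ hg (hT ▸ le_sSup ht)
    · have : sSup T ≤ f (sInf (g '' T)) :=
        sSup_le fun t ht => hfg t ▸ hf (sInf_le ⟨t, ht, rfl⟩)
      simpa only [hgf _, ← hT] using hg this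
  obtain ⟨t, ht, rfl⟩ := hm _ hm_eq
  rwa [hfg t]

theorem CMI.le_or_le_of_inf_le (hdist : ∀ a b c : A, a ⊓ (b ⊔ c) = (a ⊓ b) ⊔ (a ⊓ c))
    {m b c : A} (hm : CMI m) (h : b ⊓ c ≤ m) : b ≤ m ∨ c ≤ m := by
  let _ : DistribLattice A := DistribLattice.ofInfSupLe fun a b c => (hdist a b c).le
  have hm_eq : m = sInf {m ⊔ b, m ⊔ c} := by
    rw [sInf_pair, ← sup_inf_left, sup_eq_left.2 h]
  rcases hm _ hm_eq with h | h
  · exact Or.inl (h ▸ le_sup_right)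
  · exact Or.inr (h.symm ▸ le_sup_right)

theorem CJI.sSup_lt {j : A} (hj : CJI j) : sSup {a | a < j} < j :=
  (sSup_le fun _ ha => ha.le).lt_of_ne fun h => lt_irrefl j (hj {a | a < j} h.symm)

theorem kappa_eq_of_forall_le_iff {j m : A} (h : ∀ a, a ≤ m ↔ ¬ j ≤ a) : kappa j = m :=
  le_antisymm (sSup_le fun a ha => (h a).2 ha) (le_sSup ((h m).1 le_rfl))

theorem CJI.exists_cmi_forall_le_iff (hperf : PerfectLattice A)
    (hdist : ∀ a b c : A, a ⊓ (b ⊔ c) = (a ⊓ b) ⊔ (a ⊓ c)) {j : A} (hj : CJI j) :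
    ∃ m, CMI m ∧ ∀ a, a ≤ m ↔ ¬ j ≤ a := by
  set s := sSup {a | a < j}
  obtain ⟨m, ⟨hm, hsm⟩, hjm⟩ : ∃ m, (CMI m ∧ s ≤ m) ∧ ¬ j ≤ m := by
    by_contra! h
    exact hj.sSup_lt.not_ge ((le_sInf h).trans_eq (hperf s).2.symm)
  refine ⟨m, hm, fun a => ⟨fun ham hja => hjm (hja.trans ham), fun hja => ?_⟩⟩
  have hlt : j ⊓ a < j := inf_le_left.lt_of_ne fun h => hja (inf_eq_left.1 h)
  have hja_le : j ⊓ a ≤ m := (le_sSup (s := {a | a < j}) hlt).trans hsm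
  exact (hm.le_or_le_of_inf_le hdist hja_le).resolve_left hjm

variable {j : A}

theorem CJI.le_kappa_iff (hperf : PerfectLattice A)
    (hdist : ∀ a b c : A, a ⊓ (b ⊔ c) = (a ⊓ b) ⊔ (a ⊓ c)) (hj : CJI j) (a : A) :
    a ≤ kappa j ↔ ¬ j ≤ a := by
  obtain ⟨m, -, hm⟩ := hj.exists_cmi_forall_le_iff hperf hdist
  rw [kappa_eq_of_forall_le_iff hm, hm]

theorem CJI.cmi_kappa (hperf : PerfectLattice A)
    (hdist : ∀ a b c : A, a ⊓ (b ⊔ c) = (a ⊓ b) ⊔ (a ⊓ c)) (hj : CJI j) : CMI (kappa j) := by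
  obtain ⟨m, hm, hle⟩ := hj.exists_cmi_forall_le_iff hperf hdist
  rwa [kappa_eq_of_forall_le_iff hle]

theorem CJI.exists_le_of_le_sSup (hperf : PerfectLattice A)
    (hdist : ∀ a b c : A, a ⊓ (b ⊔ c) = (a ⊓ b) ⊔ (a ⊓ c)) (hj : CJI j) {T : Set A}
    (h : j ≤ sSup T) : ∃ t ∈ T, j ≤ t := by
  by_contra! hT
  have hT_le : sSup T ≤ kappa j := sSup_le fun t ht => (hj.le_kappa_iff hperf hdist t).2 (hT t ht)
  exact (hj.le_kappa_iff hperf hdist _).1 hT_le h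

end CompleteLattice

namespace InFL

section Lattice

variable {A : Type*} [Lattice A] (S : InFL A)

/-- Every statement about `S` has a left–right dual, obtained by applying it to `S.mirror`. -/
def mirror : InFL A where
  mul a b := S.mul b a
  one := S.one
  mul_assoc a b c := (S.mul_assoc c b a).symm
  one_mul := S.mul_one
  mul_one := S.one_mul
  lneg := S.rneg
  rneg := S.lneg
  res_left a b c := S.res_right b a c
  res_right a b c := S.res_left b a c
  rneg_lneg := S.lneg_rneg
  lneg_rneg := S.rneg_lneg

theorem mul_le_mul_right_of_le {a b : A} (h : a ≤ b) (x : A) : S.mul a x ≤ S.mul b x :=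
  (S.res_left a x _).2 (h.trans ((S.res_left b x _).1 le_rfl))

theorem le_lneg_iff_mul_le (a b : A) : b ≤ S.lneg a ↔ S.mul a b ≤ S.lneg S.one := by
  rw [S.res_right, S.rneg_lneg, S.one_mul]

theorem lneg_antitone : Antitone S.lneg := fun a b h =>
  (S.le_lneg_iff_mul_le a _).2
    ((S.mul_le_mul_right_of_le h _).trans ((S.le_lneg_iff_mul_le b _).1 le_rfl))

theorem rneg_antitone : Antitone S.rneg :=
  S.mirror.lneg_antitone

theorem le_rneg_iff {a b : A} : a ≤ S.rneg b ↔ b ≤ S.lneg a :=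
  ⟨fun h => S.lneg_rneg b ▸ S.lneg_antitone h, fun h => S.rneg_lneg a ▸ S.rneg_antitone h⟩

theorem lneg_le_iff {a b : A} : S.lneg a ≤ b ↔ S.rneg b ≤ a :=
  ⟨fun h => S.rneg_lneg a ▸ S.rneg_antitone h, fun h => S.lneg_rneg b ▸ S.lneg_antitone h⟩

theorem le_rneg_mul_iff (x y z : A) : z ≤ S.rneg (S.mul x y) ↔ y ≤ S.lneg (S.mul z x) := by
  rw [le_rneg_iff, res_right, rneg_lneg]

end Lattice

variable {A : Type*} [CompleteLattice A] (S : InFL A)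

theorem sSup_mul_le (T : Set A) (x : A) :
    S.mul (sSup T) x ≤ sSup ((S.mul · x) '' T) :=
  (S.res_left _ _ _).2 <| sSup_le fun t ht => (S.res_left t x _).1 (le_sSup ⟨t, ht, rfl⟩)

theorem cji_lneg {m : A} (hm : CMI m) : CJI (S.lneg m) :=
  hm.cji_map_of_antitone S.lneg_antitone S.rneg_antitone S.rneg_lneg S.lneg_rneg

theorem le_mul_iff_exists_cji_left (hperf : PerfectLattice A)
    (hdist : ∀ a b c : A, a ⊓ (b ⊔ c) = (a ⊓ b) ⊔ (a ⊓ c)) {y : A} (hy : CJI y) (a x : A) :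
    y ≤ S.mul a x ↔ ∃ j, CJI j ∧ j ≤ a ∧ y ≤ S.mul j x := by
  refine ⟨fun h => ?_, fun ⟨j, _, hja, hyj⟩ => hyj.trans (S.mul_le_mul_right_of_le hja x)⟩
  have hy_le : y ≤ sSup ((S.mul · x) '' {j | CJI j ∧ j ≤ a}) :=
    calc y ≤ S.mul a x := h
      _ = S.mul (sSup {j | CJI j ∧ j ≤ a}) x := congrArg (S.mul · x) (hperf a).1
      _ ≤ _ := S.sSup_mul_le _ x
  obtain ⟨_, ⟨j, hj, rfl⟩, hyj⟩ := hy.exists_le_of_le_sSup hperf hdist hy_le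
  exact ⟨j, hj.1, hj.2, hyj⟩

theorem le_mul_iff_exists_cji_right (hperf : PerfectLattice A)
    (hdist : ∀ a b c : A, a ⊓ (b ⊔ c) = (a ⊓ b) ⊔ (a ⊓ c)) {y : A} (hy : CJI y) (a x : A) :
    y ≤ S.mul x a ↔ ∃ j, CJI j ∧ j ≤ a ∧ y ≤ S.mul x j :=
  S.mirror.le_mul_iff_exists_cji_left hperf hdist hy a x

variable {z : A}

theorem lneg_kappa_le_iff (hperf : PerfectLattice A)
    (hdist : ∀ a b c : A, a ⊓ (b ⊔ c) = (a ⊓ b) ⊔ (a ⊓ c)) (hz : CJI z) (c : A) :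
    S.lneg (kappa z) ≤ c ↔ ¬ z ≤ S.rneg c := by
  rw [lneg_le_iff, hz.le_kappa_iff hperf hdist]

theorem rneg_kappa_le_iff (hperf : PerfectLattice A)
    (hdist : ∀ a b c : A, a ⊓ (b ⊔ c) = (a ⊓ b) ⊔ (a ⊓ c)) (hz : CJI z) (c : A) :
    S.rneg (kappa z) ≤ c ↔ ¬ z ≤ S.lneg c :=
  S.mirror.lneg_kappa_le_iff hperf hdist hz c

theorem cji_lneg_kappa (hperf : PerfectLattice A)
    (hdist : ∀ a b c : A, a ⊓ (b ⊔ c) = (a ⊓ b) ⊔ (a ⊓ c)) (hz : CJI z) :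
    CJI (S.lneg (kappa z)) :=
  S.cji_lneg (hz.cmi_kappa hperf hdist)

theorem cji_rneg_kappa (hperf : PerfectLattice A)
    (hdist : ∀ a b c : A, a ⊓ (b ⊔ c) = (a ⊓ b) ⊔ (a ⊓ c)) (hz : CJI z) :
    CJI (S.rneg (kappa z)) :=
  S.mirror.cji_lneg_kappa hperf hdist hz

theorem kappa_lneg_kappa (hperf : PerfectLattice A)
    (hdist : ∀ a b c : A, a ⊓ (b ⊔ c) = (a ⊓ b) ⊔ (a ⊓ c)) (hz : CJI z) :
    kappa (S.lneg (kappa z)) = S.lneg z :=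
  eq_of_forall_le_iff fun a => by
    rw [(S.cji_lneg_kappa hperf hdist hz).le_kappa_iff hperf hdist,
      S.lneg_kappa_le_iff hperf hdist hz, not_not, le_rneg_iff]

theorem kappa_rneg_kappa (hperf : PerfectLattice A)
    (hdist : ∀ a b c : A, a ⊓ (b ⊔ c) = (a ⊓ b) ⊔ (a ⊓ c)) (hz : CJI z) :
    kappa (S.rneg (kappa z)) = S.rneg z :=
  S.mirror.kappa_lneg_kappa hperf hdist hz

end InFL

theorem mem_setComp_singleton_left {W : Type*} {c : W → W → Set W} {V : Set W} {x z : W} :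
    z ∈ setComp c {x} V ↔ ∃ v ∈ V, z ∈ c x v := by
  simp [setComp]

theorem mem_setComp_singleton_right {W : Type*} {c : W → W → Set W} {U : Set W} {x z : W} :
    z ∈ setComp c U {x} ↔ ∃ u ∈ U, z ∈ c u x := by
  simp [setComp]

def InFL.dualFrame {A : Type*} [CompleteLattice A] (S : InFL A) (hperf : PerfectLattice A)
    (hdist : ∀ a b c : A, a ⊓ (b ⊔ c) = (a ⊓ b) ⊔ (a ⊓ c)) : DInFLFrame {a : A // CJI a} where
  I := {i | i.1 ≤ S.one}
  le a b := b.1 ≤ a.1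
  le_refl _ := le_rfl
  le_trans _ _ _ h₁ h₂ := h₂.trans h₁
  le_antisymm _ _ h₁ h₂ := Subtype.ext (le_antisymm h₂ h₁)
  comp a b := {c | c.1 ≤ S.mul a.1 b.1}
  tld a := ⟨S.lneg (kappa a.1), S.cji_lneg_kappa hperf hdist a.2⟩
  mns a := ⟨S.rneg (kappa a.1), S.cji_rneg_kappa hperf hdist a.2⟩
  ax1 x y := by
    simp only [mem_setComp_singleton_left, mem_setComp_singleton_right, Set.mem_ofPred_eq,
      Subtype.exists, exists_prop]
    constructor
    · conv_lhs => rw [← S.one_mul x.1]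
      exact S.le_mul_iff_exists_cji_left hperf hdist y.2 _ _
    · conv_lhs => rw [← S.mul_one x.1]
      exact S.le_mul_iff_exists_cji_right hperf hdist y.2 _ _
  ax2 _ _ h hx := h.trans hx
  ax3 _ _ _ _ h hx := h.trans hx
  ax4 x y z := by
    ext w
    simp only [mem_setComp_singleton_left, mem_setComp_singleton_right, Set.mem_ofPred_eq,
      Subtype.exists, exists_prop]
    rw [← S.le_mul_iff_exists_cji_left hperf hdist w.2,
      ← S.le_mul_iff_exists_cji_right hperf hdist w.2, S.mul_assoc]
  ax5 x y z := (S.lneg_kappa_le_iff hperf hdist z.2 _).trans <|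
    (not_congr (S.le_rneg_mul_iff _ _ _)).trans (S.rneg_kappa_le_iff hperf hdist y.2 _).symm
  ax6 x := ⟨(S.kappa_lneg_kappa hperf hdist x.2 ▸ S.rneg_lneg x.1).ge,
    (S.kappa_rneg_kappa hperf hdist x.2 ▸ S.lneg_rneg x.1).ge⟩

/-- The dual structure `A₊ = (J∞(A), I₁, ≼, ∘, ∼, −)` of a complete perfect
distributive InFL-algebra is a DInFL-frame, where `I₁ = {i : i ≤ 1}`,
`a ≼ b ⟺ b ≤ a`, `c ∈ a∘b ⟺ c ≤ a·b`, `a^∼ = ∼κ(a)` and `a^− = −κ(a)`. -/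
theorem dual_frame_of_perfect_DInFL {A : Type*} [CompleteLattice A]
    (S : InFL A) (hperf : PerfectLattice A)
    (hdist : ∀ a b c : A, a ⊓ (b ⊔ c) = (a ⊓ b) ⊔ (a ⊓ c)) :
    ∃ F : DInFLFrame {a : A // CJI a},
      F.I = {i | i.1 ≤ S.one} ∧
      (∀ a b, F.le a b ↔ b.1 ≤ a.1) ∧
      (∀ a b c, c ∈ F.comp a b ↔ c.1 ≤ S.mul a.1 b.1) ∧
      (∀ a, (F.tld a).1 = S.lneg (kappa a.1)) ∧
      (∀ a, (F.mns a).1 = S.rneg (kappa a.1)) :=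
  ⟨S.dualFrame hperf hdist, rfl, fun _ _ => Iff.rfl, fun _ _ _ => Iff.rfl,
    fun _ => rfl, fun _ => rfl⟩
end

section
/- Let W = (W, I, ≼, ∘, ∼, −, ¬) be a DqRA-frame. Then x^{∼¬} = x^{¬−} for all x ∈ W. -/
/-- A DqRA-frame: a DInFL-frame with a De Morgan operation `ng` (¬) satisfying
(7) `x^{¬¬} = x`, (8) `¬` is order-reversing, and
(9) `z⁻ ∈ x∘y ⟺ z^¬ ∈ y^{∼¬} ∘ x^{∼¬}`. -/
structure DqRAFrame (W : Type*) extends DInFLFrame W where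
  ng : W → W
  ax7 : ∀ x, ng (ng x) = x
  ax8 : ∀ x y, le x y → le (ng y) (ng x)
  ax9 : ∀ x y z, mns z ∈ comp x y ↔ ng z ∈ comp (ng (tld y)) (ng (tld x))

/-- The operation `¬U = {x : x^¬ ∉ U}` of the complex algebra of a DqRA-frame. -/
def DqRAFrame.nneg {W : Type*} (F : DqRAFrame W) (U : Set W) : Set W :=
  {x | F.ng x ∉ U}

/-!
The maps `∼` and `−` are mutually inverse, so (5) and (9) combine into
`x ∈ y∘z ↔ z^¬ ∈ y^{∼¬} ∘ x^¬`. Applied twice, this shows that `y` and `y^{∼¬∼¬}` have the same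
left action `z ↦ y∘z`; by (1) an element is determined by its left action, so `∼¬` is an
involution, i.e. `x^{∼¬∼} = x^¬`, and applying `−` gives `x^{∼¬} = x^{¬−}`.
-/

namespace DInFLFrame

variable {W : Type*} (F : DInFLFrame W)

lemma le_iff_exists_left_unit (x y : W) : F.le x y ↔ ∃ e ∈ F.I, y ∈ F.comp e x := by
  rw [(F.ax1 x y).1]
  constructor
  · rintro ⟨e, he, _, rfl, h⟩
    exact ⟨e, he, h⟩
  · rintro ⟨e, he, h⟩
    exact ⟨e, he, x, rfl, h⟩

lemma le_iff_exists_right_unit (x y : W) : F.le x y ↔ ∃ e ∈ F.I, y ∈ F.comp x e := by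
  rw [(F.ax1 x y).2]
  constructor
  · rintro ⟨_, rfl, e, he, h⟩
    exact ⟨e, he, h⟩
  · rintro ⟨e, he, h⟩
    exact ⟨x, rfl, e, he, h⟩

lemma comp_injective : Function.Injective F.comp := by
  have le_of_comp_eq : ∀ a b, F.comp a = F.comp b → F.le b a := fun a b hab => by
    obtain ⟨e, he, h⟩ := (F.le_iff_exists_right_unit a a).1 (F.le_refl a)
    exact (F.le_iff_exists_right_unit b a).2 ⟨e, he, hab ▸ h⟩
  intro a b hab
  exact F.le_antisymm _ _ (le_of_comp_eq b a hab.symm) (le_of_comp_eq a b hab)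

end DInFLFrame

namespace DqRAFrame

variable {W : Type*} (F : DqRAFrame W)

lemma mem_comp_iff_ng_mem_comp (x y z : W) :
    x ∈ F.comp y z ↔ F.ng z ∈ F.comp (F.ng (F.tld y)) (F.ng x) := by
  have h5 := F.ax5 y z (F.mns x)
  have h9 := F.ax9 (F.mns x) y z
  rw [F.tld_mns] at h5 h9
  exact h5.trans h9

lemma ng_tld_ng_tld (y : W) : F.ng (F.tld (F.ng (F.tld y))) = y := by
  refine F.comp_injective (funext fun z => Set.ext fun x => ?_)
  rw [F.mem_comp_iff_ng_mem_comp x y z, F.mem_comp_iff_ng_mem_comp (F.ng z), F.ax7, F.ax7]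

end DqRAFrame

/-- In any DqRA-frame, `x^{∼¬} = x^{¬−}` for all `x`. -/
theorem dqra_frame_di {W : Type*} (F : DqRAFrame W) :
    ∀ x : W, F.ng (F.tld x) = F.mns (F.ng x) := by
  intro x
  have h : F.tld (F.ng (F.tld x)) = F.ng x := by
    simpa only [F.ax7] using congrArg F.ng (F.ng_tld_ng_tld x)
  rw [← h, F.mns_tld]
end

section
/- Let W₁ and W₂ be DInFL-frames and let f : W₁ → W₂ be a DInFL-frame morphism. Then: (i) the map f⁺ : Up(W₂,≼₂) → Up(W₁,≼₁) defined by f⁺(U) = f⁻¹[U] is a homomorphism of the complex algebras from W₂^+ to W₁^+ preserving arbitrary unions and intersections (a complete homomorphism); (ii) if f is surjective then f⁺ is injective; (iii) if f is an order-embedding then f⁺ is surjective. -/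
/-- A DInFL-frame morphism between two DInFL-frames. -/
def IsDInFLFrameMorphism {W₁ W₂ : Type*} (F₁ : DInFLFrame W₁) (F₂ : DInFLFrame W₂)
    (f : W₁ → W₂) : Prop :=
  (∀ x y, F₁.le x y → F₂.le (f x) (f y)) ∧
  (∀ x y z, z ∈ F₁.comp x y → f z ∈ F₂.comp (f x) (f y)) ∧
  (∀ z u v, f z ∈ F₂.comp u v →
    ∃ x y, F₂.le u (f x) ∧ F₂.le v (f y) ∧ z ∈ F₁.comp x y) ∧
  (∀ x, f (F₁.tld x) = F₂.tld (f x)) ∧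
  (∀ x, f (F₁.mns x) = F₂.mns (f x)) ∧
  F₁.I = f ⁻¹' F₂.I

/-!
Taking preimages commutes with arbitrary unions and intersections, the forth and back
conditions make it commute with `∘` on upsets, and commuting with `∼`, `−` on points gives
the negations. Injectivity of `f⁺` is surjectivity of `f`; if `f` is an order-embedding,
every upset `U` of `W₁` is the preimage of the upward closure of `f[U]`.
-/

namespace DInFLFrame

variable {W₁ W₂ : Type*} (F₁ : DInFLFrame W₁) (F₂ : DInFLFrame W₂) {f : W₁ → W₂}

theorem IsUpset.preimage (hmono : ∀ x y, F₁.le x y → F₂.le (f x) (f y)) {U : Set W₂}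
    (hU : F₂.IsUpset U) : F₁.IsUpset (f ⁻¹' U) :=
  fun x y hxy hx => hU (f x) (f y) (hmono x y hxy) hx

theorem preimage_setComp
    (hforth : ∀ x y z, z ∈ F₁.comp x y → f z ∈ F₂.comp (f x) (f y))
    (hback : ∀ z u v, f z ∈ F₂.comp u v →
      ∃ x y, F₂.le u (f x) ∧ F₂.le v (f y) ∧ z ∈ F₁.comp x y)
    {U V : Set W₂} (hU : F₂.IsUpset U) (hV : F₂.IsUpset V) :
    f ⁻¹' setComp F₂.comp U V = setComp F₁.comp (f ⁻¹' U) (f ⁻¹' V) := by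
  ext z
  constructor
  · rintro ⟨u, hu, v, hv, hz⟩
    obtain ⟨x, y, hux, hvy, hxy⟩ := hback z u v hz
    exact ⟨x, hU u (f x) hux hu, y, hV v (f y) hvy hv, hxy⟩
  · rintro ⟨x, hx, y, hy, hz⟩
    exact ⟨f x, hx, f y, hy, hforth x y z hz⟩

theorem preimage_sneg (hmns : ∀ x, f (F₁.mns x) = F₂.mns (f x)) (U : Set W₂) :
    f ⁻¹' F₂.sneg U = F₁.sneg (f ⁻¹' U) := by
  ext w
  show F₂.mns (f w) ∉ U ↔ f (F₁.mns w) ∉ U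
  rw [hmns]

theorem preimage_mneg (htld : ∀ x, f (F₁.tld x) = F₂.tld (f x)) (U : Set W₂) :
    f ⁻¹' F₂.mneg U = F₁.mneg (f ⁻¹' U) := by
  ext w
  show F₂.tld (f w) ∉ U ↔ f (F₁.tld w) ∉ U
  rw [htld]

def upClosure {W : Type*} (F : DInFLFrame W) (U : Set W) : Set W :=
  {y | ∃ x ∈ U, F.le x y}

theorem isUpset_upClosure {W : Type*} (F : DInFLFrame W) (U : Set W) :
    F.IsUpset (F.upClosure U) :=
  fun _ _ hab ⟨x, hx, hxa⟩ => ⟨x, hx, F.le_trans _ _ _ hxa hab⟩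

theorem preimage_upClosure_image (hemb : ∀ x y, F₁.le x y ↔ F₂.le (f x) (f y))
    {U : Set W₁} (hU : F₁.IsUpset U) : f ⁻¹' F₂.upClosure (f '' U) = U := by
  ext z
  constructor
  · rintro ⟨_, ⟨x, hx, rfl⟩, hxz⟩
    exact hU x z ((hemb x z).mpr hxz) hx
  · intro hz
    exact ⟨f z, Set.mem_image_of_mem f hz, F₂.le_refl (f z)⟩

end DInFLFrame

/-- The dual `f⁺(U) = f⁻¹[U]` of a DInFL-frame morphism is a complete
homomorphism of complex algebras from `W₂⁺` to `W₁⁺`; it is injective when `f`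
is surjective, and surjective when `f` is an order-embedding. -/
theorem frame_morphism_dual_complete_hom {W₁ W₂ : Type*}
    (F₁ : DInFLFrame W₁) (F₂ : DInFLFrame W₂) (f : W₁ → W₂)
    (hf : IsDInFLFrameMorphism F₁ F₂ f) :
    ((∀ U, F₂.IsUpset U → F₁.IsUpset (f ⁻¹' U)) ∧
     (∀ 𝒮 : Set (Set W₂), f ⁻¹' ⋃₀ 𝒮 = ⋃₀ ((fun U => f ⁻¹' U) '' 𝒮)) ∧
     (∀ 𝒮 : Set (Set W₂), f ⁻¹' ⋂₀ 𝒮 = ⋂₀ ((fun U => f ⁻¹' U) '' 𝒮)) ∧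
     f ⁻¹' F₂.I = F₁.I ∧
     (∀ U V, F₂.IsUpset U → F₂.IsUpset V →
       f ⁻¹' (setComp F₂.comp U V) = setComp F₁.comp (f ⁻¹' U) (f ⁻¹' V)) ∧
     (∀ U, F₂.IsUpset U → f ⁻¹' (F₂.sneg U) = F₁.sneg (f ⁻¹' U)) ∧
     (∀ U, F₂.IsUpset U → f ⁻¹' (F₂.mneg U) = F₁.mneg (f ⁻¹' U))) ∧
    (Function.Surjective f →
      ∀ U V, F₂.IsUpset U → F₂.IsUpset V → f ⁻¹' U = f ⁻¹' V → U = V) ∧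
    ((∀ x y, F₁.le x y ↔ F₂.le (f x) (f y)) →
      ∀ U, F₁.IsUpset U → ∃ V, F₂.IsUpset V ∧ f ⁻¹' V = U) := by
  obtain ⟨hmono, hforth, hback, htld, hmns, hI⟩ := hf
  refine ⟨⟨fun U => DInFLFrame.IsUpset.preimage F₁ F₂ hmono, ?_, ?_, hI.symm,
    fun U V => DInFLFrame.preimage_setComp F₁ F₂ hforth hback,
    fun U _ => DInFLFrame.preimage_sneg F₁ F₂ hmns U,
    fun U _ => DInFLFrame.preimage_mneg F₁ F₂ htld U⟩, ?_, ?_⟩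
  · intro 𝒮
    rw [Set.sUnion_image, Set.preimage_sUnion]
  · intro 𝒮
    rw [Set.sInter_image, Set.preimage_sInter]
  · intro hsurj U V _ _ hUV
    exact Set.preimage_injective.mpr hsurj hUV
  · intro hemb U hU
    exact ⟨F₂.upClosure (f '' U), F₂.isUpset_upClosure _,
      DInFLFrame.preimage_upClosure_image F₁ F₂ hemb hU⟩
end

section
/- Let A = (A,∧,∨,·,1,∼,−) be a distributive InFL-algebra and let W_A be the set of generalised prime filters of the lattice reduct of A. For F, G ∈ W_A define: F ∈ 𝓘 iff 1 ∈ F; F ≼ G iff F ⊆ G; F∙G = {H ∈ W_A : F·G ⊆ H} where F·G = {a·b : a ∈ F, b ∈ G}; F^∼ = {∼a : a ∉ F}; F^− = {−a : a ∉ F}. Then 𝔉(A) = (W_A, 𝓘, ≼, ∙, ∼, −, ∅, A) is a doubly-pointed DInFL-frame: (W_A, 𝓘, ≼, ∙, ∼, −) is a DInFL-frame, the poset (W_A, ⊆) is bounded with least element ∅ and greatest element A, and 𝓘 is a proper non-empty upset. -/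
/-- A generalised prime filter of a lattice: a prime filter (a nonempty proper
upward-closed subset closed under meets whose complement is closed under
joins), or the whole lattice, or the empty set. -/
def IsGPF {A : Type*} [Lattice A] (F : Set A) : Prop :=
  F = Set.univ ∨ F = ∅ ∨
    (F.Nonempty ∧ F ≠ Set.univ ∧
     (∀ a b : A, a ∈ F → a ≤ b → b ∈ F) ∧
     (∀ a b : A, a ∈ F → b ∈ F → a ⊓ b ∈ F) ∧
     (∀ a b : A, a ⊔ b ∈ F → a ∈ F ∨ b ∈ F))

/-! Residuation makes `−` an order isomorphism from `A` onto its order dual with inverse `∼`, so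
`F^∼` and `F^−` are again generalised prime filters, mutually inverse, and axiom (5) is the unit
of the residuation. Axioms (1) and (4) need witnesses: whenever `P` is a filter with `P·X ⊆ Y`
there is a generalised prime filter `H ⊇ P` with `H·X ⊆ Y`. It comes from the prime ideal
separation theorem for distributive lattices, applied to `P` and the complement of
`{p | p·X ⊆ Y}`, which is an ideal because multiplication distributes over joins and `Y` is
prime. -/

namespace InFL

variable {A : Type*} [Lattice A] (S : InFL A)

def rnegIso : A ≃o Aᵒᵈ where
  toFun a := OrderDual.toDual (S.rneg a)
  invFun a := S.lneg (OrderDual.ofDual a)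
  left_inv := S.lneg_rneg
  right_inv := S.rneg_lneg
  map_rel_iff' {a b} := by
    change S.rneg b ≤ S.rneg a ↔ a ≤ b
    rw [S.le_rneg_iff_le_lneg, S.lneg_rneg]

theorem rneg_inf (a b : A) : S.rneg (a ⊓ b) = S.rneg a ⊔ S.rneg b :=
  S.rnegIso.map_inf a b

theorem rneg_sup (a b : A) : S.rneg (a ⊔ b) = S.rneg a ⊓ S.rneg b :=
  S.rnegIso.map_sup a b

theorem lneg_inf (a b : A) : S.lneg (a ⊓ b) = S.lneg a ⊔ S.lneg b :=
  S.rnegIso.symm.map_sup (OrderDual.toDual a) (OrderDual.toDual b)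

theorem lneg_sup (a b : A) : S.lneg (a ⊔ b) = S.lneg a ⊓ S.lneg b :=
  S.rnegIso.symm.map_inf (OrderDual.toDual a) (OrderDual.toDual b)

theorem gc_mul_right (b : A) :
    GaloisConnection (S.mul · b) (fun c => S.rneg (S.mul b (S.lneg c))) :=
  fun a c => S.res_left a b c

theorem gc_mul_left (a : A) :
    GaloisConnection (S.mul a) (fun c => S.lneg (S.mul (S.rneg c) a)) :=
  fun b c => S.res_right a b c

theorem mul_le_mul {a a' b b' : A} (ha : a ≤ a') (hb : b ≤ b') :
    S.mul a b ≤ S.mul a' b' :=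
  ((S.gc_mul_right b).monotone_l ha).trans ((S.gc_mul_left a').monotone_l hb)

theorem sup_mul (a a' b : A) : S.mul (a ⊔ a') b = S.mul a b ⊔ S.mul a' b :=
  (S.gc_mul_right b).l_sup

theorem mul_sup (a b b' : A) : S.mul a (b ⊔ b') = S.mul a b ⊔ S.mul a b' :=
  (S.gc_mul_left a).l_sup

end InFL

section GeneralisedPrimeFilter

variable {A : Type*} [Lattice A]

theorem isGPF_univ : IsGPF (Set.univ : Set A) := Or.inl rfl

theorem isGPF_empty : IsGPF (∅ : Set A) := Or.inr (Or.inl rfl)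

theorem isGPF_iff {F : Set A} :
    IsGPF F ↔ IsUpperSet F ∧ InfClosed F ∧ SupClosed Fᶜ := by
  constructor
  · rintro (rfl | rfl | ⟨-, -, hup, hinf, hprime⟩)
    · simp [isUpperSet_univ, infClosed_univ, supClosed_empty]
    · simp [isUpperSet_empty, infClosed_empty, supClosed_univ]
    · refine ⟨fun a b hab ha => hup a b ha hab, fun a ha b hb => hinf a b ha hb, ?_⟩
      intro a ha b hb hab
      exact (hprime a b hab).elim ha hb
  · rintro ⟨hup, hinf, hprime⟩
    refine or_iff_not_imp_left.2 fun hF => or_iff_not_imp_left.2 fun hF' => ?_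
    refine ⟨Set.nonempty_iff_ne_empty.2 hF', hF, fun a b ha hab => hup hab ha,
      fun a b ha hb => hinf ha hb, fun a b hab => ?_⟩
    by_contra! h
    exact hprime h.1 h.2 hab

theorem IsGPF.isUpperSet {F : Set A} (hF : IsGPF F) : IsUpperSet F := (isGPF_iff.1 hF).1

theorem IsGPF.infClosed {F : Set A} (hF : IsGPF F) : InfClosed F := (isGPF_iff.1 hF).2.1

theorem IsGPF.supClosed_compl {F : Set A} (hF : IsGPF F) : SupClosed Fᶜ := (isGPF_iff.1 hF).2.2

theorem IsGPF.preimage_compl {B : Type*} [Lattice B] {F : Set B} (hF : IsGPF F) {f : A → B}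
    (hinf : ∀ a b, f (a ⊓ b) = f a ⊔ f b) (hsup : ∀ a b, f (a ⊔ b) = f a ⊓ f b) :
    IsGPF (f ⁻¹' Fᶜ) := by
  refine isGPF_iff.2 ⟨fun a b hab ha hb => ha (hF.isUpperSet ?_ hb), ?_, ?_⟩
  · rw [← sup_eq_right.2 hab, hsup]
    exact inf_le_left
  · intro a ha b hb
    simpa only [Set.mem_preimage, hinf] using hF.supClosed_compl ha hb
  · intro a ha b hb
    simp only [Set.mem_compl_iff, Set.mem_preimage, not_not] at ha hb ⊢
    rw [hsup]
    exact hF.infClosed ha hb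

end GeneralisedPrimeFilter

theorem exists_isGPF_between {A : Type*} [DistribLattice A] {P N : Set A} (hPu : IsUpperSet P)
    (hPi : InfClosed P) (hNu : IsUpperSet N) (hNs : SupClosed Nᶜ) (hPN : P ⊆ N) :
    ∃ H, IsGPF H ∧ P ⊆ H ∧ H ⊆ N := by
  obtain rfl | hP := P.eq_empty_or_nonempty
  · exact ⟨∅, isGPF_empty, subset_rfl, Set.empty_subset N⟩
  obtain hN | hN := Nᶜ.eq_empty_or_nonempty
  · exact ⟨Set.univ, isGPF_univ, Set.subset_univ P, Set.compl_empty_iff.1 hN ▸ subset_rfl⟩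
  let F : Order.PFilter A :=
    (Order.IsPFilter.of_def hP hPi.codirectedOn fun hab ha => hPu hab ha).toPFilter
  let I : Order.Ideal A := Order.IsIdeal.toIdeal ⟨hNu.compl, hN, hNs.directedOn⟩
  obtain ⟨J, hJ, hIJ, hFJ⟩ :=
    DistribLattice.prime_ideal_of_disjoint_filter_ideal (F := F) (I := I)
      (Set.disjoint_compl_right_iff_subset.2 hPN)
  refine ⟨(J : Set A)ᶜ, isGPF_iff.2 ⟨J.lower.compl, ?_, ?_⟩, ?_, ?_⟩
  · intro a ha b hb hab
    exact (hJ.mem_or_mem hab).elim ha hb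
  · rw [compl_compl]
    exact fun a ha b hb => J.sup_mem ha hb
  · exact Set.subset_compl_iff_disjoint_right.2 hFJ
  · exact Set.compl_subset_comm.1 hIJ

section MonotoneOperation

variable {A : Type*} [DistribLattice A] {m : A → A → A}

theorem infClosed_upperClosure_image2
    (hm : ∀ {a a' b b'}, a ≤ a' → b ≤ b' → m a b ≤ m a' b') {X Y : Set A}
    (hX : InfClosed X) (hY : InfClosed Y) :
    InfClosed (upperClosure (Set.image2 m X Y) : Set A) := by
  rintro e ⟨_, ⟨a, ha, b, hb, rfl⟩, hab⟩ e' ⟨_, ⟨a', ha', b', hb', rfl⟩, hab'⟩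
  exact ⟨_, Set.mem_image2_of_mem (hX ha ha') (hY hb hb'),
    le_inf ((hm inf_le_left inf_le_left).trans hab) ((hm inf_le_right inf_le_right).trans hab')⟩

theorem exists_isGPF_left_factor
    (hm : ∀ {a a' b b'}, a ≤ a' → b ≤ b' → m a b ≤ m a' b')
    (hsup : ∀ a a' b, m (a ⊔ a') b ≤ m a b ⊔ m a' b)
    {X Y P : Set A} (hX : InfClosed X) (hY : IsGPF Y) (hPu : IsUpperSet P) (hPi : InfClosed P)
    (hPXY : ∀ p ∈ P, ∀ c ∈ X, m p c ∈ Y) :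
    ∃ H, IsGPF H ∧ P ⊆ H ∧ ∀ p ∈ H, ∀ c ∈ X, m p c ∈ Y := by
  have hNu : IsUpperSet {p | ∀ c ∈ X, m p c ∈ Y} :=
    fun p q hpq hp c hc => hY.isUpperSet (hm hpq le_rfl) (hp c hc)
  have hNs : SupClosed {p | ∀ c ∈ X, m p c ∈ Y}ᶜ := by
    intro p hp q hq hpq
    simp only [Set.mem_compl_iff, Set.mem_ofPred_eq, not_forall] at hp hq
    obtain ⟨c, hc, hpc⟩ := hp
    obtain ⟨c', hc', hqc'⟩ := hq
    have hle : m (p ⊔ q) (c ⊓ c') ≤ m p c ⊔ m q c' :=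
      (hsup p q _).trans (sup_le_sup (hm le_rfl inf_le_left) (hm le_rfl inf_le_right))
    exact hY.supClosed_compl hpc hqc' (hY.isUpperSet hle (hpq _ (hX hc hc')))
  exact exists_isGPF_between hPu hPi hNu hNs hPXY

end MonotoneOperation

abbrev GPF (A : Type*) [Lattice A] := {F : Set A // IsGPF F}

namespace InFL

section Lattice

variable {A : Type*} [Lattice A] (S : InFL A)

def gpfOne : Set (GPF A) := {F | S.one ∈ F.1}

def gpfComp (F G : GPF A) : Set (GPF A) := {H | ∀ a ∈ F.1, ∀ b ∈ G.1, S.mul a b ∈ H.1}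

def gpfTld (F : GPF A) : GPF A := ⟨S.rneg ⁻¹' F.1ᶜ, F.2.preimage_compl S.rneg_inf S.rneg_sup⟩

def gpfMns (F : GPF A) : GPF A := ⟨S.lneg ⁻¹' F.1ᶜ, F.2.preimage_compl S.lneg_inf S.lneg_sup⟩

theorem coe_gpfTld (F : GPF A) : (S.gpfTld F).1 = S.lneg '' F.1ᶜ := by
  rw [Set.image_eq_preimage_of_inverse S.rneg_lneg S.lneg_rneg]
  rfl

theorem coe_gpfMns (F : GPF A) : (S.gpfMns F).1 = S.rneg '' F.1ᶜ := by
  rw [Set.image_eq_preimage_of_inverse S.lneg_rneg S.rneg_lneg]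
  rfl

theorem gpfMns_gpfTld (F : GPF A) : S.gpfMns (S.gpfTld F) = F := by
  ext a
  simp [gpfMns, gpfTld, S.rneg_lneg]

theorem gpfTld_gpfMns (F : GPF A) : S.gpfTld (S.gpfMns F) = F := by
  ext a
  simp [gpfMns, gpfTld, S.lneg_rneg]

theorem gpfTld_mem_gpfComp_iff (x y z : GPF A) :
    S.gpfTld z ∈ S.gpfComp x y ↔ S.gpfMns y ∈ S.gpfComp z x := by
  simp only [gpfComp, gpfTld, gpfMns, Set.mem_ofPred_eq, Set.mem_preimage, Set.mem_compl_iff]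
  constructor
  · intro h c hc a ha hca
    exact h a ha _ hca (z.2.isUpperSet ((S.gc_mul_right a).le_u_l c) hc)
  · intro h a ha b hb hab
    exact h _ hab a ha (y.2.isUpperSet ((S.gc_mul_left a).le_u_l b) hb)

end Lattice

section DistribLattice

variable {A : Type*} [DistribLattice A] (S : InFL A)

theorem subset_iff_mem_setComp_gpfOne_singleton (x y : GPF A) :
    x.1 ⊆ y.1 ↔ y ∈ setComp S.gpfComp S.gpfOne {x} := by
  constructor
  · intro hxy
    obtain ⟨H, hH, hone, hHxy⟩ := exists_isGPF_left_factor (m := S.mul) S.mul_le_mul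
      (fun a a' b => (S.sup_mul a a' b).le) x.2.infClosed y.2 (isUpperSet_Ici S.one)
      (fun a ha b hb => le_inf ha hb)
      fun p hp c hc => y.2.isUpperSet ((S.one_mul c).ge.trans (S.mul_le_mul hp le_rfl)) (hxy hc)
    exact ⟨⟨H, hH⟩, hone le_rfl, x, rfl, hHxy⟩
  · rintro ⟨u, hu, _, rfl, hy⟩ b hb
    simpa only [S.one_mul] using hy _ hu b hb

theorem subset_iff_mem_setComp_singleton_gpfOne (x y : GPF A) :
    x.1 ⊆ y.1 ↔ y ∈ setComp S.gpfComp {x} S.gpfOne := by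
  constructor
  · intro hxy
    obtain ⟨H, hH, hone, hxHy⟩ := exists_isGPF_left_factor (m := fun b a => S.mul a b)
      (fun hb ha => S.mul_le_mul ha hb) (fun b b' a => (S.mul_sup a b b').le) x.2.infClosed y.2
      (isUpperSet_Ici S.one) (fun a ha b hb => le_inf ha hb)
      fun p hp a ha => y.2.isUpperSet ((S.mul_one a).ge.trans (S.mul_le_mul le_rfl hp)) (hxy ha)
    exact ⟨x, rfl, ⟨H, hH⟩, hone le_rfl, fun a ha b hb => hxHy b hb a ha⟩
  · rintro ⟨_, rfl, u, hu, hy⟩ a ha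
    simpa only [S.mul_one] using hy a ha _ hu

theorem mem_setComp_gpfComp_singleton_iff (x y z w : GPF A) :
    w ∈ setComp S.gpfComp (S.gpfComp x y) {z} ↔
      ∀ a ∈ x.1, ∀ b ∈ y.1, ∀ c ∈ z.1, S.mul (S.mul a b) c ∈ w.1 := by
  constructor
  · rintro ⟨u, hu, _, rfl, hw⟩ a ha b hb c hc
    exact hw _ (hu a ha b hb) c hc
  · intro hw
    obtain ⟨H, hH, hxyH, hHzw⟩ := exists_isGPF_left_factor (m := S.mul) S.mul_le_mul
      (fun a a' b => (S.sup_mul a a' b).le) z.2.infClosed w.2 (upperClosure _).upper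
      (infClosed_upperClosure_image2 S.mul_le_mul x.2.infClosed y.2.infClosed)
      fun p ⟨_, ⟨a, ha, b, hb, hab⟩, hp⟩ c hc =>
        w.2.isUpperSet (S.mul_le_mul (hab ▸ hp) le_rfl) (hw a ha b hb c hc)
    exact ⟨⟨H, hH⟩, fun a ha b hb => hxyH (subset_upperClosure (Set.mem_image2_of_mem ha hb)),
      z, rfl, hHzw⟩

theorem mem_setComp_singleton_gpfComp_iff (x y z w : GPF A) :
    w ∈ setComp S.gpfComp {x} (S.gpfComp y z) ↔
      ∀ a ∈ x.1, ∀ b ∈ y.1, ∀ c ∈ z.1, S.mul a (S.mul b c) ∈ w.1 := by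
  constructor
  · rintro ⟨_, rfl, u, hu, hw⟩ a ha b hb c hc
    exact hw a ha _ (hu b hb c hc)
  · intro hw
    obtain ⟨H, hH, hyzH, hxHw⟩ := exists_isGPF_left_factor (m := fun b a => S.mul a b)
      (fun hb ha => S.mul_le_mul ha hb) (fun b b' a => (S.mul_sup a b b').le) x.2.infClosed w.2
      (upperClosure _).upper
      (infClosed_upperClosure_image2 S.mul_le_mul y.2.infClosed z.2.infClosed)
      fun p ⟨_, ⟨b, hb, c, hc, hbc⟩, hp⟩ a ha =>
        w.2.isUpperSet (S.mul_le_mul le_rfl (hbc ▸ hp)) (hw a ha b hb c hc)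
    exact ⟨x, rfl, ⟨H, hH⟩,
      fun b hb c hc => hyzH (subset_upperClosure (Set.mem_image2_of_mem hb hc)),
      fun a ha p hp => hxHw p hp a ha⟩

def gpfFrame : DInFLFrame (GPF A) where
  I := S.gpfOne
  le F G := F.1 ⊆ G.1
  le_refl _ := subset_rfl
  le_trans _ _ _ := Set.Subset.trans
  le_antisymm _ _ h h' := Subtype.ext (h.antisymm h')
  comp := S.gpfComp
  tld := S.gpfTld
  mns := S.gpfMns
  ax1 x y := ⟨S.subset_iff_mem_setComp_gpfOne_singleton x y,
    S.subset_iff_mem_setComp_singleton_gpfOne x y⟩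
  ax2 _ _ hxy hx := hxy hx
  ax3 _ _ _ _ hxy hx a ha b hb := hxy (hx a ha b hb)
  ax4 x y z := by
    ext w
    rw [mem_setComp_gpfComp_singleton_iff, mem_setComp_singleton_gpfComp_iff]
    simp only [S.mul_assoc]
  ax5 := S.gpfTld_mem_gpfComp_iff
  ax6 x := ⟨(congrArg Subtype.val (S.gpfMns_gpfTld x)).subset,
    (congrArg Subtype.val (S.gpfTld_gpfMns x)).subset⟩

end DistribLattice

end InFL

/-- The structure `𝔉(A) = (W_A, 𝓘, ⊆, ∙, ∼, −, ∅, A)` on the generalised prime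
filters of a distributive InFL-algebra is a doubly-pointed DInFL-frame:
`(W_A, 𝓘, ⊆, ∙, ∼, −)` is a DInFL-frame with `𝓘 = {F : 1 ∈ F}`,
`H ∈ F∙G ⟺ F·G ⊆ H`, `F^∼ = {∼a : a ∉ F}` and `F^− = {−a : a ∉ F}`; the poset
is bounded with least element `∅` and greatest element `A`, and `𝓘` is a proper
non-empty upset. -/
theorem gpf_doubly_pointed_frame {A : Type*} [DistribLattice A] (S : InFL A) :
    ∃ Fr : DInFLFrame {F : Set A // IsGPF F},
      Fr.I = {F | S.one ∈ F.1} ∧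
      (∀ F G, Fr.le F G ↔ F.1 ⊆ G.1) ∧
      (∀ F G H, H ∈ Fr.comp F G ↔ ∀ a ∈ F.1, ∀ b ∈ G.1, S.mul a b ∈ H.1) ∧
      (∀ F, (Fr.tld F).1 = S.lneg '' F.1ᶜ) ∧
      (∀ F, (Fr.mns F).1 = S.rneg '' F.1ᶜ) ∧
      (∃ bot top : {F : Set A // IsGPF F}, bot.1 = ∅ ∧ top.1 = Set.univ ∧
        ∀ F, Fr.le bot F ∧ Fr.le F top) ∧
      Fr.I.Nonempty ∧ Fr.I ≠ Set.univ := by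
  refine ⟨S.gpfFrame, rfl, fun _ _ => Iff.rfl, fun _ _ _ => Iff.rfl, S.coe_gpfTld, S.coe_gpfMns,
    ⟨⟨∅, isGPF_empty⟩, ⟨Set.univ, isGPF_univ⟩, rfl, rfl,
      fun F => ⟨Set.empty_subset F.1, Set.subset_univ F.1⟩⟩,
    ⟨⟨Set.univ, isGPF_univ⟩, trivial⟩,
    (Set.ne_univ_iff_exists_notMem _).2 ⟨⟨∅, isGPF_empty⟩, id⟩⟩
end
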